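/- arXiv:2111.13971 — 7 statements merged into one kernel-verified Lean document; each statement's English description precedes it below -/
import Mathlib

section
/- Let n ≥ 3 be an odd integer and set r = (1/2)·(tan(π/n)·tan(π/(2n)))/(tan(π/n) − tan(π/(2n))). Then for every integer i with 1 ≤ i ≤ n−1, one has 2r·(1/tan(iπ/n) − 1/tan(π/n)) = sin((1−i)π/n)/sin(iπ/n). -/
/-!
Since `tan a - tan b = sin (a - b) / (cos a * cos b)`, taking `a = 2b = π/n` collapses `2r` to
`sin (π/n)`; the claim is then the subtraction formula for `sin (π/n - iπ/n)` divided by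
`sin (iπ/n)`.
-/

open Real

namespace Real

lemma tan_sub_tan {a b : ℝ} (ha : cos a ≠ 0) (hb : cos b ≠ 0) :
    tan a - tan b = sin (a - b) / (cos a * cos b) := by
  rw [tan_eq_sin_div_cos, tan_eq_sin_div_cos, sin_sub]
  field_simp

lemma tan_mul_tan_div_tan_sub_tan {a b : ℝ} (ha : cos a ≠ 0) (hb : cos b ≠ 0) :
    tan a * tan b / (tan a - tan b) = sin a * sin b / sin (a - b) := by
  rw [tan_sub_tan ha hb, div_div_eq_mul_div, tan_eq_sin_div_cos, tan_eq_sin_div_cos]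
  congr 1
  field_simp

lemma tan_two_mul_mul_tan_div_tan_two_mul_sub_tan {b : ℝ} (h2b : cos (2 * b) ≠ 0)
    (hcb : cos b ≠ 0) (hsb : sin b ≠ 0) :
    tan (2 * b) * tan b / (tan (2 * b) - tan b) = sin (2 * b) := by
  rw [tan_mul_tan_div_tan_sub_tan h2b hcb, two_mul, add_sub_cancel_right, mul_div_assoc,
    div_self hsb, mul_one]

lemma sin_mul_one_div_tan_sub_one_div_tan {a x : ℝ} (ha : sin a ≠ 0) (hx : sin x ≠ 0) :
    sin a * (1 / tan x - 1 / tan a) = sin (a - x) / sin x := by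
  rw [tan_eq_sin_div_cos, tan_eq_sin_div_cos, one_div_div, one_div_div, sin_sub]
  field_simp

lemma cos_pi_div_pos {x : ℝ} (hx : 2 < x) : 0 < cos (π / x) := by
  apply cos_pos_of_mem_Ioo
  constructor
  · linarith [pi_pos, div_pos pi_pos (by linarith : (0 : ℝ) < x)]
  · rw [div_lt_div_iff₀ (by linarith) two_pos]
    nlinarith [pi_pos]

lemma sin_nat_mul_pi_div_pos {k n : ℕ} (hk : 0 < k) (hkn : k < n) : 0 < sin (k * π / n) := by
  have hn : (0 : ℝ) < n := by exact_mod_cast hk.trans hkn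
  apply sin_pos_of_pos_of_lt_pi
  · have : (0 : ℝ) < k := by exact_mod_cast hk
    positivity
  · rw [div_lt_iff₀ hn, mul_comm]
    exact mul_lt_mul_of_pos_left (by exact_mod_cast hkn) pi_pos

end Real

theorem stmt_0_general (n : ℕ) (hn : 3 ≤ n)
    (r : ℝ)
    (hr : r = (1 / 2) * (Real.tan (π / n) * Real.tan (π / (2 * n))) /
      (Real.tan (π / n) - Real.tan (π / (2 * n))))
    (i : ℕ) (hi1 : 1 ≤ i) (hi2 : i ≤ n - 1) :
    2 * r * (1 / Real.tan (i * π / n) - 1 / Real.tan (π / n)) =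
      Real.sin ((1 - (i : ℝ)) * π / n) / Real.sin (i * π / n) := by
  have hn2 : (2 : ℝ) < n := by exact_mod_cast (by omega : 2 < n)
  have hsin_one : sin (π / n) ≠ 0 := by
    simpa using (sin_nat_mul_pi_div_pos (k := 1) one_pos (by omega : 1 < n)).ne'
  have hsin_half : sin (π / (2 * n)) ≠ 0 := by
    simpa using (sin_nat_mul_pi_div_pos (k := 1) (n := 2 * n) one_pos (by omega)).ne'
  have hdouble : π / n = 2 * (π / (2 * n)) := by field_simp
  have h2r : 2 * r = sin (π / n) := by
    rw [hr, mul_div_assoc, hdouble, tan_two_mul_mul_tan_div_tan_two_mul_sub_tan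
      (hdouble ▸ (cos_pi_div_pos hn2).ne') (cos_pi_div_pos (by linarith)).ne' hsin_half]
    ring
  rw [h2r, sin_mul_one_div_tan_sub_one_div_tan hsin_one
      (sin_nat_mul_pi_div_pos hi1 (by omega)).ne',
    show (1 - (i : ℝ)) * π / n = π / n - i * π / n by ring]

theorem stmt_0 (n : ℕ) (hn : 3 ≤ n) (hodd : Odd n)
    (r : ℝ)
    (hr : r = (1 / 2) * (Real.tan (π / n) * Real.tan (π / (2 * n))) /
      (Real.tan (π / n) - Real.tan (π / (2 * n))))
    (i : ℕ) (hi1 : 1 ≤ i) (hi2 : i ≤ n - 1) :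
    2 * r * (1 / Real.tan (i * π / n) - 1 / Real.tan (π / n)) =
      Real.sin ((1 - (i : ℝ)) * π / n) / Real.sin (i * π / n) :=
  stmt_0_general n hn r hr i hi1 hi2
end

section
/- Let n ≥ 5 be an odd integer and, for 1 ≤ i ≤ n−1, set v_i = sin((1−i)π/n)/sin(iπ/n). Then: (a) for every integer i with 1 ≤ i ≤ n−2, there exist a real 2×2 matrix M with det M = 1 and positive real numbers a, b such that M·(1, −v_i)ᵀ = (a, 0)ᵀ and M·(1, −v_{i+1})ᵀ = (0, b)ᵀ; and (b) there exist a real 2×2 matrix M with det M = 1 and positive reals a, b such that M·(1, −v_{n−1})ᵀ = (a, 0)ᵀ and M·(0, 1)ᵀ = (0, b)ᵀ. -/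
/-! Sending the first vector of a positively oriented pair `x, y` to the positive `x`-axis and the
second to the positive `y`-axis by a matrix of determinant one is always possible: take the rows
`(y₁, -y₀)` and `(-x₁, x₀) / det[x y]`. The pairs `(1, -vᵢ), (1, -vᵢ₊₁)` are positively oriented
because `vᵢ = sin (θ - iθ) / sin (iθ)` with `θ = π / n` is strictly decreasing in `i`, and the
pair `(1, -v), (0, 1)` is positively oriented for every `v`. -/

open Real Set

theorem Matrix.exists_det_eq_one_mulVec_eq_of_cross_pos {K : Type*} [Field K] [LinearOrder K]
    [IsStrictOrderedRing K] (x y : Fin 2 → K) (h : 0 < x 0 * y 1 - x 1 * y 0) :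
    ∃ (M : Matrix (Fin 2) (Fin 2) K) (a b : K), M.det = 1 ∧ 0 < a ∧ 0 < b ∧
      M.mulVec x = ![a, 0] ∧ M.mulVec y = ![0, b] := by
  set d := x 0 * y 1 - x 1 * y 0
  refine ⟨!![y 1, -y 0; -x 1 / d, x 0 / d], d, 1, ?_, h, one_pos, ?_, ?_⟩
  · rw [Matrix.det_fin_two_of]
    field_simp
    ring
  all_goals
    ext j
    fin_cases j <;> simp [Matrix.mulVec, dotProduct, Fin.sum_univ_two] <;> field_simp <;> ring

theorem Real.sin_sub_mul_sin_sub_sin_sub_mul_sin (θ x y : ℝ) :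
    sin (θ - x) * sin y - sin (θ - y) * sin x = sin θ * sin (y - x) := by
  simp only [sin_sub]
  ring

theorem Real.strictAntiOn_sin_sub_div_sin {θ : ℝ} (hθ : 0 < sin θ) :
    StrictAntiOn (fun x => sin (θ - x) / sin x) (Ioo 0 π) := by
  intro x ⟨hx0, hxπ⟩ y ⟨hy0, hyπ⟩ hxy
  have hsx : 0 < sin x := sin_pos_of_pos_of_lt_pi hx0 hxπ
  have hsy : 0 < sin y := sin_pos_of_pos_of_lt_pi hy0 hyπ
  have hsyx : 0 < sin (y - x) := sin_pos_of_pos_of_lt_pi (by linarith) (by linarith)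
  rw [div_lt_div_iff₀ hsy hsx]
  linarith [sin_sub_mul_sin_sub_sin_sub_mul_sin θ x y, mul_pos hθ hsyx]

theorem stmt_2_general (n : ℕ)
    (v : ℕ → ℝ)
    (hv : ∀ i : ℕ, 1 ≤ i → i ≤ n - 1 →
      v i = Real.sin ((1 - (i : ℝ)) * π / n) / Real.sin (i * π / n)) :
    (∀ i : ℕ, 1 ≤ i → i ≤ n - 2 →
      ∃ (M : Matrix (Fin 2) (Fin 2) ℝ) (a b : ℝ), M.det = 1 ∧ 0 < a ∧ 0 < b ∧
        M.mulVec ![1, -v i] = ![a, 0] ∧ M.mulVec ![1, -v (i + 1)] = ![0, b]) ∧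
    (∃ (M : Matrix (Fin 2) (Fin 2) ℝ) (a b : ℝ), M.det = 1 ∧ 0 < a ∧ 0 < b ∧
      M.mulVec ![1, -v (n - 1)] = ![a, 0] ∧ M.mulVec ![0, 1] = ![0, b]) := by
  refine ⟨fun i hi1 hin => ?_, Matrix.exists_det_eq_one_mulVec_eq_of_cross_pos _ _ (by simp)⟩
  have hn : (0 : ℝ) < n := by exact_mod_cast (show 0 < n by omega)
  have hv' : ∀ k : ℕ, 1 ≤ k → k ≤ n - 1 →
      v k = sin (π / n - k * π / n) / sin (k * π / n) := fun k hk1 hkn => by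
    rw [hv k hk1 hkn]
    ring_nf
  have hmem : ∀ k : ℕ, 1 ≤ k → k ≤ n - 1 → (k : ℝ) * π / n ∈ Ioo 0 π := fun k hk1 hkn => by
    have hk : (k : ℝ) < n := by exact_mod_cast (show k < n by omega)
    have hk0 : (0 : ℝ) < k := by exact_mod_cast hk1
    exact ⟨by positivity, by rw [div_lt_iff₀ hn]; nlinarith [pi_pos]⟩
  have hdecr : v (i + 1) < v i := by
    rw [hv' i hi1 (by omega), hv' (i + 1) (by omega) (by omega)]
    obtain ⟨hθ0, hθπ⟩ := hmem 1 le_rfl (by omega)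
    refine strictAntiOn_sin_sub_div_sin (by simpa using sin_pos_of_pos_of_lt_pi hθ0 hθπ)
      (hmem i hi1 (by omega)) (hmem (i + 1) (by omega) (by omega)) ?_
    gcongr
    exact_mod_cast i.lt_succ_self
  exact Matrix.exists_det_eq_one_mulVec_eq_of_cross_pos _ _ (by simpa using hdecr)

theorem stmt_2 (n : ℕ) (hn : 5 ≤ n) (hodd : Odd n)
    (v : ℕ → ℝ)
    (hv : ∀ i : ℕ, 1 ≤ i → i ≤ n - 1 →
      v i = Real.sin ((1 - (i : ℝ)) * π / n) / Real.sin (i * π / n)) :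
    (∀ i : ℕ, 1 ≤ i → i ≤ n - 2 →
      ∃ (M : Matrix (Fin 2) (Fin 2) ℝ) (a b : ℝ), M.det = 1 ∧ 0 < a ∧ 0 < b ∧
        M.mulVec ![1, -v i] = ![a, 0] ∧ M.mulVec ![1, -v (i + 1)] = ![0, b]) ∧
    (∃ (M : Matrix (Fin 2) (Fin 2) ℝ) (a b : ℝ), M.det = 1 ∧ 0 < a ∧ 0 < b ∧
      M.mulVec ![1, -v (n - 1)] = ![a, 0] ∧ M.mulVec ![0, 1] = ![0, b]) :=
  stmt_2_general n v hv
end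

section
/- Let φ = (1+√5)/2 and define the matrices σ_0 = [[1, φ],[0, 1]], σ_1 = [[φ, φ],[1, φ]], σ_2 = [[φ, 1],[φ, φ]], σ_3 = [[1, 0],[φ, 1]], and the rational functions S_1(α) = (φα+1)/α, S_2(α) = (φα+φ)/(φα+1), S_3(α) = (α+φ)/(φα+φ), S_4(α) = 1/(α+φ). Then for every m ∈ {1,2,3,4} and all real numbers x > 0, y > 0, writing (u, w)ᵀ = σ_{m−1}·(x, y)ᵀ, one has w > 0 and u/w = S_m(y/x). -/
/-! Dividing both coordinates of `σ (x, y)ᵀ` by `x` shows that their quotient depends only on the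
slope `y / x`, through a linear fractional map read off from the entries of `σ`; positivity of
the second coordinate holds because every `σ m` has a nonnegative lower row with positive
lower-right entry. -/

open Matrix

theorem Matrix.mulVec_fin_two_div_eq_moebius {K : Type*} [Field K] (a b c d : K) {x : K}
    (y : K) (hx : x ≠ 0) :
    (!![a, b; c, d] *ᵥ ![x, y]) 0 / (!![a, b; c, d] *ᵥ ![x, y]) 1 =
      (a + b * (y / x)) / (c + d * (y / x)) := by
  rw [← mul_div_mul_left (a + b * (y / x)) _ hx]
  simp only [mulVec_fin_two, of_apply, cons_val', cons_val_zero, cons_val_one, empty_val',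
    cons_val_fin_one]
  congr 1 <;> field_simp

theorem Matrix.mulVec_fin_two_one_pos {R : Type*} [Semiring R] [PartialOrder R]
    [IsStrictOrderedRing R] (a b : R) {c d x y : R} (hc : 0 ≤ c) (hd : 0 < d) (hx : 0 < x)
    (hy : 0 < y) : 0 < (!![a, b; c, d] *ᵥ ![x, y]) 1 := by
  simp only [mulVec_fin_two, of_apply, cons_val', cons_val_zero, cons_val_one, empty_val',
    cons_val_fin_one]
  positivity

theorem stmt_3 (φ : ℝ) (hφ : φ = (1 + Real.sqrt 5) / 2)
    (σ : Fin 4 → Matrix (Fin 2) (Fin 2) ℝ)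
    (hσ0 : σ 0 = !![1, φ; 0, 1])
    (hσ1 : σ 1 = !![φ, φ; 1, φ])
    (hσ2 : σ 2 = !![φ, 1; φ, φ])
    (hσ3 : σ 3 = !![1, 0; φ, 1])
    (S : Fin 4 → ℝ → ℝ)
    (hS0 : ∀ α : ℝ, S 0 α = (φ * α + 1) / α)
    (hS1 : ∀ α : ℝ, S 1 α = (φ * α + φ) / (φ * α + 1))
    (hS2 : ∀ α : ℝ, S 2 α = (α + φ) / (φ * α + φ))
    (hS3 : ∀ α : ℝ, S 3 α = 1 / (α + φ)) :
    ∀ (m : Fin 4) (x y : ℝ), 0 < x → 0 < y →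
      0 < (σ m).mulVec ![x, y] 1 ∧
      (σ m).mulVec ![x, y] 0 / (σ m).mulVec ![x, y] 1 = S m (y / x) := by
  have hφ_pos : 0 < φ := hφ ▸ by positivity
  intro m x y hx hy
  match m with
  | 0 =>
    rw [hσ0, hS0]
    exact ⟨mulVec_fin_two_one_pos _ _ le_rfl one_pos hx hy,
      (mulVec_fin_two_div_eq_moebius _ _ _ _ _ hx.ne').trans (by ring)⟩
  | 1 =>
    rw [hσ1, hS1]
    exact ⟨mulVec_fin_two_one_pos _ _ zero_le_one hφ_pos hx hy,
      (mulVec_fin_two_div_eq_moebius _ _ _ _ _ hx.ne').trans (by ring)⟩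
  | 2 =>
    rw [hσ2, hS2]
    exact ⟨mulVec_fin_two_one_pos _ _ hφ_pos.le hφ_pos hx hy,
      (mulVec_fin_two_div_eq_moebius _ _ _ _ _ hx.ne').trans (by ring)⟩
  | 3 =>
    rw [hσ3, hS3]
    exact ⟨mulVec_fin_two_one_pos _ _ hφ_pos.le one_pos hx hy,
      (mulVec_fin_two_div_eq_moebius _ _ _ _ _ hx.ne').trans (by ring)⟩
end

section
/- Let φ = (1+√5)/2, r = (1/4)·√((5−√5)/2), and for a complex number z with |z| = 1 and z ≠ −1 define f(z) = 2r·Im(z)/(1+Re(z)) − (1+√5)/4. Then for every complex z with |z| = 1, z ≠ −1, and z ≠ e^{3πi/5}, one has f(z) ≠ 0 and f(e^{2πi/5}·z)·f(z) = −φ·f(z) − 1. -/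
/-!
Writing a unit complex number as `z = exp (2 y I)`, the quotient `Im z / (1 + Re z)` is `tan y`, so the
projection `sin α · tan y - cos α` equals `-cos (y + α) / cos y`. Rotation by `2 α` replaces `y`
by `y + α`, and the three-term recurrence `cos (y + 2α) + cos y = 2 cos α · cos (y + α)` becomes
the Möbius relation `T x = (-2 cos α · x - 1) / x`. For `α = π / 5` one has `2 r = sin (π / 5)`,
`(1 + √5) / 4 = cos (π / 5)` and `φ = 2 cos (π / 5)`.
-/

open Real Complex

noncomputable def stereoProj (α : ℝ) (z : ℂ) : ℝ := Real.sin α * z.im / (1 + z.re) - Real.cos α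

lemma exp_two_mul_I_eq_neg_one_iff (y : ℝ) :
    Complex.exp (↑(2 * y) * I) = -1 ↔ Real.cos y = 0 := by
  refine ⟨fun h ↦ ?_, fun hy ↦ ?_⟩
  · have hre := congrArg Complex.re h
    rw [exp_ofReal_mul_I_re, Real.cos_two_mul] at hre
    simpa using hre
  · apply Complex.ext
    · rw [exp_ofReal_mul_I_re, Real.cos_two_mul, hy]
      norm_num
    · rw [exp_ofReal_mul_I_im, Real.sin_two_mul, hy]
      simp

lemma exists_eq_exp_two_mul_I {z : ℂ} (hz : ‖z‖ = 1) : ∃ y : ℝ, z = Complex.exp (↑(2 * y) * I) :=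
  ⟨arg z / 2, by rw [mul_div_cancel₀ _ two_ne_zero, ← one_mul (Complex.exp _), ← ofReal_one, ← hz,
    norm_mul_exp_arg_mul_I]⟩

lemma stereoProj_exp_two_mul_I (α : ℝ) {y : ℝ} (hy : Real.cos y ≠ 0) :
    stereoProj α (Complex.exp (↑(2 * y) * I)) = -Real.cos (y + α) / Real.cos y := by
  rw [stereoProj, exp_ofReal_mul_I_re, exp_ofReal_mul_I_im, Real.sin_two_mul, Real.cos_two_mul,
    Real.cos_add]
  field_simp
  ring

theorem stereoProj_rotate (α : ℝ) {y : ℝ} (hy : Real.cos y ≠ 0) (hyα : Real.cos (y + α) ≠ 0) :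
    stereoProj α (Complex.exp (↑(2 * (y + α)) * I)) * stereoProj α (Complex.exp (↑(2 * y) * I)) =
      -(2 * Real.cos α) * stereoProj α (Complex.exp (↑(2 * y) * I)) - 1 := by
  have recurrence : Real.cos (y + α + α) + Real.cos y = 2 * Real.cos α * Real.cos (y + α) := by
    rw [Real.cos_add_cos]
    ring_nf
  rw [stereoProj_exp_two_mul_I α hy, stereoProj_exp_two_mul_I α hyα]
  field_simp
  linear_combination recurrence

lemma sin_pi_div_five : Real.sin (π / 5) = √((5 - √5) / 2) / 2 := by
  have hsq : Real.sin (π / 5) ^ 2 = (√((5 - √5) / 2) / 2) ^ 2 := by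
    have h5 : √5 < 5 := by
      rw [Real.sqrt_lt' (by norm_num)]
      norm_num
    rw [Real.sin_sq, cos_pi_div_five]
    linear_combination (-1 / 16 : ℝ) * Real.sq_sqrt (show (0 : ℝ) ≤ 5 by norm_num) -
      (1 / 4 : ℝ) * Real.sq_sqrt (show (0 : ℝ) ≤ (5 - √5) / 2 by linarith)
  have hpos : 0 < Real.sin (π / 5) :=
    Real.sin_pos_of_pos_of_lt_pi (by positivity) (by linarith [pi_pos])
  exact (pow_left_inj₀ hpos.le (by positivity) two_ne_zero).mp hsq

theorem stmt_6 (φ r : ℝ) (hφ : φ = (1 + Real.sqrt 5) / 2)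
    (hr : r = (1 / 4) * Real.sqrt ((5 - Real.sqrt 5) / 2))
    (f : ℂ → ℝ)
    (hf : ∀ z : ℂ, ‖z‖ = 1 → z ≠ -1 →
      f z = 2 * r * z.im / (1 + z.re) - (1 + Real.sqrt 5) / 4) :
    ∀ z : ℂ, ‖z‖ = 1 → z ≠ -1 → z ≠ Complex.exp (3 * π * Complex.I / 5) →
      f z ≠ 0 ∧ f (Complex.exp (2 * π * Complex.I / 5) * z) * f z = -φ * f z - 1 := by
  intro z hz hz1 hz3
  obtain ⟨y, rfl⟩ := exists_eq_exp_two_mul_I hz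
  have hf_eq : ∀ x : ℝ, Real.cos x ≠ 0 →
      f (Complex.exp (↑(2 * x) * I)) = stereoProj (π / 5) (Complex.exp (↑(2 * x) * I)) := by
    intro x hx
    rw [hf _ (norm_exp_ofReal_mul_I _) ((exp_two_mul_I_eq_neg_one_iff x).not.mpr hx), stereoProj,
      sin_pi_div_five, cos_pi_div_five, hr]
    ring
  have hrot : Complex.exp (2 * π * I / 5) * Complex.exp (↑(2 * y) * I) =
      Complex.exp (↑(2 * (y + π / 5)) * I) := by
    rw [← Complex.exp_add]
    push_cast
    ring_nf
  have hy : Real.cos y ≠ 0 := (exp_two_mul_I_eq_neg_one_iff y).not.mp hz1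
  have hyπ : Real.cos (y + π / 5) ≠ 0 := by
    refine fun h ↦ hz3 (mul_left_cancel₀ (Complex.exp_ne_zero (2 * π * I / 5)) ?_)
    rw [hrot, (exp_two_mul_I_eq_neg_one_iff _).mpr h, ← Complex.exp_add, ← exp_pi_mul_I]
    ring_nf
  rw [hrot, hf_eq y hy, hf_eq _ hyπ, stereoProj_rotate _ hy hyπ, hφ, cos_pi_div_five,
    stereoProj_exp_two_mul_I _ hy]
  exact ⟨div_ne_zero (neg_ne_zero.mpr hyπ) hy, by ring⟩
end

section
/- Let n ≥ 3 be an integer and, for 1 ≤ i ≤ n−1, set v_i = sin((1−i)π/n)/sin(iπ/n). Then for all integers i, j with 1 ≤ i < j ≤ n−1, one has v_j < v_i; that is, the sequence v_1 = 0 > v_2 > ⋯ > v_{n−1} is strictly decreasing. -/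
open Real

/-
With θ = π/n, expanding sin(θ - iθ) gives v_i = sin θ · cot(iθ) - cos θ, and since
0 < θ ≤ iθ < π for 1 ≤ i < n, the claim reduces to cot being strictly decreasing on (0, π).
-/

theorem Real.cot_lt_cot {a b : ℝ} (ha : 0 < a) (hab : a < b) (hb : b < π) : cot b < cot a := by
  have hsa : 0 < sin a := sin_pos_of_pos_of_lt_pi ha (hab.trans hb)
  have hsb : 0 < sin b := sin_pos_of_pos_of_lt_pi (ha.trans hab) hb
  have hsba : 0 < sin (b - a) := sin_pos_of_pos_of_lt_pi (by linarith) (by linarith)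
  rw [sin_sub] at hsba
  rw [cot_eq_cos_div_sin, cot_eq_cos_div_sin, div_lt_div_iff₀ hsb hsa]
  linarith

theorem Real.sin_sub_div_sin (θ x : ℝ) (hx : sin x ≠ 0) :
    sin (θ - x) / sin x = sin θ * cot x - cos θ := by
  rw [sin_sub, cot_eq_cos_div_sin]
  field_simp

theorem Real.natCast_mul_pi_div_mem_Ioo {k n : ℕ} (hk : 0 < k) (hkn : k < n) :
    (k : ℝ) * π / n ∈ Set.Ioo 0 π := by
  have hk' : (0 : ℝ) < k := by exact_mod_cast hk
  have hkn' : (k : ℝ) < n := by exact_mod_cast hkn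
  refine ⟨div_pos (mul_pos hk' pi_pos) (hk'.trans hkn'), ?_⟩
  rw [div_lt_iff₀ (hk'.trans hkn'), mul_comm π]
  exact mul_lt_mul_of_pos_right hkn' pi_pos

theorem stmt_11_general (n : ℕ)
    (v : ℕ → ℝ)
    (hv : ∀ i : ℕ, 1 ≤ i → i ≤ n - 1 →
      v i = Real.sin ((1 - (i : ℝ)) * π / n) / Real.sin (i * π / n)) :
    ∀ i j : ℕ, 1 ≤ i → i < j → j ≤ n - 1 → v j < v i := by
  intro i j hi hij hj
  have hjn : j < n := by omega
  have hv_cot : ∀ k : ℕ, 1 ≤ k → k < n →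
      v k = sin (π / n) * cot (k * π / n) - cos (π / n) := by
    intro k hk hkn
    rw [hv k hk (by omega), show (1 - (k : ℝ)) * π / n = π / n - k * π / n by ring,
      sin_sub_div_sin]
    exact (sin_pos_of_mem_Ioo (natCast_mul_pi_div_mem_Ioo hk hkn)).ne'
  have hθ : 0 < sin (π / n) := by
    simpa using sin_pos_of_mem_Ioo
      (natCast_mul_pi_div_mem_Ioo one_pos (hi.trans_lt (hij.trans hjn)))
  have hcot : cot (j * π / n) < cot (i * π / n) := by
    refine cot_lt_cot (natCast_mul_pi_div_mem_Ioo hi (hij.trans hjn)).1 ?_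
      (natCast_mul_pi_div_mem_Ioo (by omega) hjn).2
    have hn : (0 : ℝ) < n := Nat.cast_pos.2 (by omega)
    gcongr
  rw [hv_cot i hi (hij.trans hjn), hv_cot j (hi.trans hij.le) hjn]
  exact sub_lt_sub_right (mul_lt_mul_of_pos_left hcot hθ) _

theorem stmt_11 (n : ℕ) (hn : 3 ≤ n)
    (v : ℕ → ℝ)
    (hv : ∀ i : ℕ, 1 ≤ i → i ≤ n - 1 →
      v i = Real.sin ((1 - (i : ℝ)) * π / n) / Real.sin (i * π / n)) :
    ∀ i j : ℕ, 1 ≤ i → i < j → j ≤ n - 1 → v j < v i :=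
  stmt_11_general n v hv
end

section
/- Let n ≥ 3 be an odd integer. Then for every integer i with 1 ≤ i ≤ n−1, (tan(π/(2n))/(tan(π/n) − tan(π/(2n)))) · (tan(π/n)/tan(iπ/n) − 1) = −(tan((i−1)π/n)/(tan(π/n) + tan((i−1)π/n))) · (tan(π/n)/tan(π/(2n)) − 1). -/
/-!
Write t = tan(π/2n), T = tan(π/n) and w = tan((i-1)π/n). The addition formula gives
tan(iπ/n) = (T + w)/(1 - T w), and after clearing denominators the claimed identity becomes
t²(1 + T²) = (T - t)², that is T(1 - t²) = 2t: the double-angle formula. Oddness of n keeps every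
angle kπ/n away from the poles of tan, and tan(iπ/n) ≠ 0 because n ∤ i.
-/

open Real

lemma mul_div_sub_one_eq_of_double_angle {K : Type*} [Field K] [LinearOrder K]
    [IsStrictOrderedRing K] {t T w : K} (hT : T = 2 * t / (1 - t ^ 2)) (hT0 : T ≠ 0)
    (hsum : (T + w) / (1 - T * w) ≠ 0) :
    t / (T - t) * (T / ((T + w) / (1 - T * w)) - 1) = -(w / (T + w)) * (T / t - 1) := by
  obtain ⟨hTw, hTw'⟩ := div_ne_zero_iff.mp hsum
  obtain ⟨⟨ht, -⟩, hsq⟩ : (t ≠ 0 ∧ (2 : K) ≠ 0) ∧ 1 - t ^ 2 ≠ 0 := by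
    simpa [hT, not_or, mul_comm] using hT0
  replace hT : T * (1 - t ^ 2) = 2 * t := (eq_div_iff hsq).mp hT
  have hTt : T - t ≠ 0 := by
    have : (T - t) * (1 - t ^ 2) = t * (1 + t ^ 2) := by linear_combination hT
    exact left_ne_zero_of_mul (this ▸ mul_ne_zero ht (by positivity))
  field_simp
  linear_combination (w * T) * hT

lemma int_mul_eq_two_mul_of_mul_pi_div_eq {n : ℕ} (hn : n ≠ 0) {m k : ℤ}
    (h : m * π / n = k * π / 2) : k * n = 2 * m := by
  have hn' : (n : ℝ) ≠ 0 := by exact_mod_cast hn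
  field_simp at h
  exact_mod_cast (by linarith : (k * n : ℝ) = 2 * m)

lemma int_mul_pi_div_ne_odd_mul_pi_div_two {n : ℕ} (hn : Odd n) (m k : ℤ) :
    m * π / n ≠ (2 * k + 1) * π / 2 := by
  intro h
  have hkn := int_mul_eq_two_mul_of_mul_pi_div_eq hn.pos.ne' (k := 2 * k + 1) (by exact_mod_cast h)
  have : Odd (2 * m) := hkn ▸ (odd_two_mul_add_one k).mul (by exact_mod_cast hn)
  exact Int.not_even_iff_odd.mpr this (even_two_mul m)

lemma tan_int_mul_pi_div_ne_zero {n : ℕ} (hn : Odd n) {m : ℤ} (hm : ¬ (n : ℤ) ∣ m) :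
    tan (m * π / n) ≠ 0 := by
  refine tan_ne_zero_iff.mpr fun k h => ?_
  have hkn := int_mul_eq_two_mul_of_mul_pi_div_eq hn.pos.ne' h.symm
  obtain ⟨j, rfl⟩ : Even k := by
    refine (Int.even_mul.mp (hkn ▸ even_two_mul m)).resolve_right ?_
    exact Int.not_even_iff_odd.mpr (by exact_mod_cast hn)
  exact hm ⟨j, by linarith⟩

theorem stmt_13 (n : ℕ) (hn : 3 ≤ n) (hodd : Odd n) :
    ∀ i : ℕ, 1 ≤ i → i ≤ n - 1 →
      (Real.tan (π / (2 * n)) / (Real.tan (π / n) - Real.tan (π / (2 * n)))) *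
          (Real.tan (π / n) / Real.tan (i * π / n) - 1) =
        -(Real.tan (((i : ℝ) - 1) * π / n) /
            (Real.tan (π / n) + Real.tan (((i : ℝ) - 1) * π / n))) *
          (Real.tan (π / n) / Real.tan (π / (2 * n)) - 1) := by
  intro i hi1 hi2
  have hn0 : (0 : ℝ) < n := by exact_mod_cast hodd.pos
  have hT : tan (π / n) = 2 * tan (π / (2 * n)) / (1 - tan (π / (2 * n)) ^ 2) := by
    rw [← tan_two_mul]; congr 1; field_simp
  have hT0 : tan (π / n) ≠ 0 := by
    refine (tan_pos_of_pos_of_lt_pi_div_two (by positivity) ?_).ne'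
    rw [div_lt_div_iff₀ hn0 two_pos]
    have hn3 : (3 : ℝ) ≤ n := by exact_mod_cast hn
    nlinarith [pi_pos]
  have hsum : tan (i * π / n) = (tan (π / n) + tan ((i - 1) * π / n)) /
      (1 - tan (π / n) * tan ((i - 1) * π / n)) := by
    rw [show (i : ℝ) * π / n = π / n + (i - 1) * π / n by ring, tan_add']
    exact ⟨fun k => by simpa using int_mul_pi_div_ne_odd_mul_pi_div_two hodd 1 k,
      fun k => by simpa using int_mul_pi_div_ne_odd_mul_pi_div_two hodd (i - 1) k⟩
  have hi : tan (i * π / n) ≠ 0 := by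
    have hndvd : ¬ (n : ℤ) ∣ i := by
      exact_mod_cast Nat.not_dvd_of_pos_of_lt (by omega) (by omega)
    simpa using tan_int_mul_pi_div_ne_zero hodd hndvd
  rw [hsum] at hi ⊢
  exact mul_div_sub_one_eq_of_double_angle hT hT0 hi
end

section
/- Define a sequence of polynomials over ℝ by P_0(x) = 1, P_1(x) = x − 1, and P_k(x) = x·P_{k−1}(x) − P_{k−2}(x) for k ≥ 2. Then for every integer m ≥ 1, P_m(2·cos(π/(2m+1))) = 0. -/
/-!
The recurrence is that of the Vieta–Fibonacci polynomials `S k` (rescaled Chebyshev polynomials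
of the second kind), and the initial values give `P k = S k - S (k - 1)`. Since
`S k (2 cos θ) * sin θ = sin ((k + 1) θ)`, we get
`P k (2 cos θ) * sin θ = sin ((k + 1) θ) - sin (k θ)`, which vanishes at `θ = π / (2m + 1)`, `k = m`
because `(m + 1) θ = π - m θ`; and `sin θ ≠ 0` there.
-/

open Real Polynomial

theorem eq_S_sub_S_of_rec {R : Type*} [CommRing R] (P : ℕ → R[X])
    (hP0 : P 0 = 1) (hP1 : P 1 = X - 1)
    (hPk : ∀ k : ℕ, 2 ≤ k → P k = X * P (k - 1) - P (k - 2)) (k : ℕ) :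
    P k = Chebyshev.S R k - Chebyshev.S R (k - 1) := by
  induction k using Nat.twoStepInduction with
  | zero => simp [hP0]
  | one => simp [hP1]
  | more k ih₀ ih₁ =>
    rw [hPk (k + 2) (by omega), Nat.add_sub_cancel, show k + 2 - 1 = k + 1 from rfl, ih₀, ih₁]
    push_cast
    rw [add_sub_cancel_right, show (k : ℤ) + 2 - 1 = k + 1 by ring]
    linear_combination Chebyshev.S_add_one R (k : ℤ) - Chebyshev.S_add_two R (k : ℤ)

theorem eval_S_sub_S_two_mul_cos_mul_sin (θ : ℝ) (n : ℤ) :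
    (Chebyshev.S ℝ n - Chebyshev.S ℝ (n - 1)).eval (2 * cos θ) * sin θ =
      sin ((n + 1) * θ) - sin (n * θ) := by
  rw [eval_sub, sub_mul, Chebyshev.S_two_mul_real_cos, Chebyshev.S_two_mul_real_cos]
  push_cast
  ring_nf

theorem eval_S_sub_S_two_mul_cos_pi_div (m : ℕ) (hm : 1 ≤ m) :
    (Chebyshev.S ℝ m - Chebyshev.S ℝ (m - 1)).eval (2 * cos (π / (2 * m + 1))) = 0 := by
  set θ := π / (2 * m + 1) with hθ
  have hden : (0 : ℝ) < 2 * m + 1 := by positivity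
  have hθ_pos : 0 < θ := div_pos pi_pos hden
  have hθ_lt : θ < π := by
    rw [hθ, div_lt_iff₀ hden]
    nlinarith [pi_pos, (Nat.one_le_cast (α := ℝ)).2 hm]
  have hsin : sin θ ≠ 0 := (sin_pos_of_pos_of_lt_pi hθ_pos hθ_lt).ne'
  have hsupp : ((m : ℤ) + 1 : ℝ) * θ = π - (m : ℤ) * θ := by
    push_cast
    rw [hθ]
    field_simp
    ring
  have h := eval_S_sub_S_two_mul_cos_mul_sin θ m
  rw [hsupp, sin_pi_sub, sub_self] at h
  exact (mul_eq_zero.mp h).resolve_right hsin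

theorem stmt_14 (P : ℕ → Polynomial ℝ)
    (hP0 : P 0 = 1) (hP1 : P 1 = X - 1)
    (hPk : ∀ k : ℕ, 2 ≤ k → P k = X * P (k - 1) - P (k - 2)) :
    ∀ m : ℕ, 1 ≤ m → (P m).eval (2 * Real.cos (π / (2 * m + 1))) = 0 := by
  intro m hm
  rw [eq_S_sub_S_of_rec P hP0 hP1 hPk m]
  exact eval_S_sub_S_two_mul_cos_pi_div m hm
end
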